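/- In a full-information protocol in the crash-failure model with at most t failures, for all processes i and j and every run r: process i knows ∃v at time t+1 in r if and only if process j knows ∃v at time t+1 in r. -/

import Mathlib

attribute [local instance] Classical.propDecidable

/-- An adversary in the synchronous crash-failure model: an input vector of binary
initial values, a failure pattern given by the delivery relation `F` (`F m j i` means
the message sent by `j` at time `m` is delivered to `i` at time `m+1`, i.e. in round `m+1`),
and a crash round for each process (`⊤` meaning the process never crashes).
A process behaves correctly before its crashing round and sends nothing afterwards;
during its crashing round it may send to an arbitrary subset. -/
structure Adversary (n : ℕ) where
  init : Fin n → Bool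
  F : ℕ → Fin n → Fin n → Prop
  crash : Fin n → ℕ∞
  crash_pos : ∀ j, 1 ≤ crash j
  before_crash : ∀ (m : ℕ) (j i : Fin n), ((m + 1 : ℕ) : ℕ∞) < crash j → F m j i
  after_crash : ∀ (m : ℕ) (j i : Fin n), crash j < ((m + 1 : ℕ) : ℕ∞) → ¬ F m j i

namespace Adversary

variable {n : ℕ}

/-- A process is faulty if it crashes at some point. -/
def Faulty (A : Adversary n) (j : Fin n) : Prop := A.crash j ≠ ⊤

/-- The number `f` of actual failures in the run determined by the adversary. -/
noncomputable def numFaults (A : Adversary n) : ℕ := {j | A.Faulty j}.ncard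

/-- A process is active at time `m` if it has not crashed before time `m`. -/
def Active (A : Adversary n) (j : Fin n) (m : ℕ) : Prop := ((m : ℕ) : ℕ∞) < A.crash j

end Adversary

/-- `Seen A ⟨j,ℓ⟩ ⟨i,m⟩`: node `⟨j,ℓ⟩` is in the view (communication graph) of node
`⟨i,m⟩`, i.e. there is a message chain from `⟨j,ℓ⟩` to `⟨i,m⟩`. -/
inductive Seen {n : ℕ} (A : Adversary n) : Fin n × ℕ → Fin n × ℕ → Prop
  | refl (p : Fin n × ℕ) : Seen A p p
  | self {p : Fin n × ℕ} {i : Fin n} {m : ℕ} : Seen A p (i, m) → Seen A p (i, m + 1)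
  | step {p : Fin n × ℕ} {j i : Fin n} {m : ℕ} : Seen A p (j, m) → A.F m j i →
      Seen A p (i, m + 1)

open Adversary

/-- Two adversaries give process `i` the same view at time `m` in a full-information
protocol: the same nodes are seen, with the same initial values at seen time-0 nodes
and the same incoming edges at seen later nodes. -/
def sameView {n : ℕ} (A B : Adversary n) (i : Fin n) (m : ℕ) : Prop :=
  (∀ p, Seen A p (i, m) ↔ Seen B p (i, m)) ∧
  (∀ j, Seen A (j, 0) (i, m) → A.init j = B.init j) ∧
  (∀ (k : ℕ) (j j' : Fin n), Seen A (j', k + 1) (i, m) → (A.F k j j' ↔ B.F k j j'))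

/-- The local state of (active) process `i` at time `m` is the same under both
adversaries: `i` is active in both and has the same full-information view. -/
def sameLocal {n : ℕ} (A B : Adversary n) (i : Fin n) (m : ℕ) : Prop :=
  A.Active i m ∧ B.Active i m ∧ sameView A B i m

/-- The runs of the system are those generated by adversaries with at most `t` crashes. -/
def Valid {n : ℕ} (t : ℕ) (A : Adversary n) : Prop := A.numFaults ≤ t

/-- Knowledge in the full-information protocol: `i` knows the fact `φ` at time `m`
iff `φ` holds at time `m` in every run (with at most `t` failures) in which `i` has
the same local state. -/
def Knows {n : ℕ} (t : ℕ) (φ : Adversary n → ℕ → Prop) (A : Adversary n) (i : Fin n)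
    (m : ℕ) : Prop :=
  ∀ B : Adversary n, Valid t B → sameLocal A B i m → φ B m

/-- The fact `∃v`: some process has initial value `v`. -/
def existsVal {n : ℕ} (v : Bool) : Adversary n → ℕ → Prop := fun A _ => ∃ j, A.init j = v

/-- Node `⟨j',m'⟩` is revealed to `⟨i,m⟩`: either it is seen by `⟨i,m⟩`, or for some
seen node `⟨i',m'⟩` the edge `(⟨j',m'-1⟩,⟨i',m'⟩)` is absent from `i`'s view
(proving that `j'` crashed before time `m'`). -/
def RevealedNode {n : ℕ} (A : Adversary n) (j' : Fin n) (m' : ℕ) (i : Fin n) (m : ℕ) :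
    Prop :=
  Seen A (j', m') (i, m) ∨
  ∃ (i' : Fin n) (k : ℕ), m' = k + 1 ∧ Seen A (i', k + 1) (i, m) ∧ ¬ A.F k j' i'

/-- Time `k` is revealed to `⟨i,m⟩` if every node `⟨j',k⟩` is revealed to `⟨i,m⟩`. -/
def RevealedTime {n : ℕ} (A : Adversary n) (k : ℕ) (i : Fin n) (m : ℕ) : Prop :=
  ∀ j', RevealedNode A j' k i m

/-- A hidden path w.r.t. `⟨i,m⟩`: for each `k ≤ m` a node `⟨j_k,k⟩` not revealed to `⟨i,m⟩`. -/
def HiddenPath {n : ℕ} (A : Adversary n) (i : Fin n) (m : ℕ) : Prop :=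
  ∃ js : ℕ → Fin n, ∀ k ≤ m, ¬ RevealedNode A (js k) k i m

/-- `not-known(∃0)`: no process active at time `m` knows `∃0`. -/
def notKnown0 {n : ℕ} (t : ℕ) : Adversary n → ℕ → Prop :=
  fun A m => ∀ j, A.Active j m → ¬ Knows t (existsVal false) A j m

/-- A (full-information, deterministic) decision protocol, described by the decision
status function: `P A i m = some v` iff by time `m` process `i` has decided `v`
in the run determined by adversary `A`. -/
abbrev ProtoDec (n : ℕ) : Type := Adversary n → Fin n → ℕ → Option Bool

/-- Sanity conditions making a decision-status function a protocol: decisions are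
irrevocable, and (for active processes) depend only on the local state. -/
def IsProtocol {n : ℕ} (t : ℕ) (P : ProtoDec n) : Prop :=
  (∀ A i m v, P A i m = some v → P A i (m + 1) = some v) ∧
  (∀ A B i m, Valid t A → Valid t B → sameLocal A B i m → P A i m = P B i m)

/-- Process `i` performs the action `decide(v)` at time `m`: it is decided on `v`
at `m` and was undecided before. -/
def DecidesAt {n : ℕ} (P : ProtoDec n) (A : Adversary n) (i : Fin n) (m : ℕ) (v : Bool) :
    Prop :=
  P A i m = some v ∧ ∀ k < m, P A i k = none

/-- Decision: every correct process eventually decides. -/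
def Decision {n : ℕ} (t : ℕ) (P : ProtoDec n) : Prop :=
  ∀ A : Adversary n, Valid t A → ∀ i, ¬ A.Faulty i → ∃ m, P A i m ≠ none

/-- Validity: if all initial values are `v` then correct processes decide `v`. -/
def Validity {n : ℕ} (t : ℕ) (P : ProtoDec n) : Prop :=
  ∀ A : Adversary n, Valid t A → ∀ v : Bool, (∀ j, A.init j = v) →
    ∀ i m w, ¬ A.Faulty i → P A i m = some w → w = v

/-- Agreement: all correct processes decide on the same value. -/
def Agreement {n : ℕ} (t : ℕ) (P : ProtoDec n) : Prop :=
  ∀ A : Adversary n, Valid t A → ∀ i j m m' v w, ¬ A.Faulty i → ¬ A.Faulty j →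
    P A i m = some v → P A j m' = some w → v = w

def ConsensusSolves {n : ℕ} (t : ℕ) (P : ProtoDec n) : Prop :=
  Decision t P ∧ Validity t P ∧ Agreement t P

/-- Uniform Agreement: all processes that decide (faulty or not) decide the same value. -/
def UniformAgreement {n : ℕ} (t : ℕ) (P : ProtoDec n) : Prop :=
  ∀ A : Adversary n, Valid t A → ∀ i j m m' v w,
    P A i m = some v → P A j m' = some w → v = w

def UniformConsensusSolves {n : ℕ} (t : ℕ) (P : ProtoDec n) : Prop :=
  Decision t P ∧ Validity t P ∧ UniformAgreement t P

/-- `Q` dominates `P`: for every adversary and process, if `i` has decided by time `m`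
in `P` then `i` has decided by time `m` in `Q`. -/
def Dominates {n : ℕ} (t : ℕ) (Q P : ProtoDec n) : Prop :=
  ∀ A : Adversary n, Valid t A → ∀ i m, P A i m ≠ none → Q A i m ≠ none

def StrictlyDominates {n : ℕ} (t : ℕ) (Q P : ProtoDec n) : Prop :=
  Dominates t Q P ∧ ¬ Dominates t P Q

/-- Turn a per-time decision rule into a decision-status function (the first decision
taken is kept forever). -/
def runDec (step : ℕ → Option Bool) : ℕ → Option Bool
  | 0 => step 0
  | m + 1 => (runDec step m).elim (step (m + 1)) some

/-- The protocol `P₀`: decide 0 as soon as `K_i ∃0` holds, otherwise decide 1 at time `t+1`. -/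
noncomputable def P0 (n t : ℕ) : ProtoDec n := fun A i =>
  runDec fun m =>
    if Knows t (existsVal false) A i m then some false
    else if m = t + 1 then some true
    else none

/-- The unbeatable protocol `Opt₀`: decide 0 as soon as `K_i ∃0` holds, and decide 1
as soon as `K_i not-known(∃0)` holds. -/
noncomputable def Opt0 (n t : ℕ) : ProtoDec n := fun A i =>
  runDec fun m =>
    if Knows t (existsVal false) A i m then some false
    else if Knows t (notKnown0 t) A i m then some true
    else none

/-- The number of processes with initial value `false` (0). -/
noncomputable def zeros {n : ℕ} (A : Adversary n) : ℕ :=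
  (Finset.univ.filter fun j => A.init j = false).card

/-- The number of processes with initial value `true` (1). -/
noncomputable def ones {n : ℕ} (A : Adversary n) : ℕ :=
  (Finset.univ.filter fun j => A.init j = true).card

/-- The fact `Maj = 0`: at least `n/2` initial values are 0. -/
def Maj0 (n : ℕ) : Adversary n → ℕ → Prop := fun A _ => n ≤ 2 * zeros A

/-- The fact `Maj = 1`: strictly more than `n/2` initial values are 1. -/
def Maj1 (n : ℕ) : Adversary n → ℕ → Prop := fun A _ => n < 2 * ones A

noncomputable def seenZeros {n : ℕ} (A : Adversary n) (i : Fin n) (m : ℕ) : ℕ :=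
  (Finset.univ.filter fun j => Seen A (j, 0) (i, m) ∧ A.init j = false).card

noncomputable def seenOnes {n : ℕ} (A : Adversary n) (i : Fin n) (m : ℕ) : ℕ :=
  (Finset.univ.filter fun j => Seen A (j, 0) (i, m) ∧ A.init j = true).card

/-- `Maj(vals(i,m))`: 0 if at least half of the initial values known to `i` at `m`
are 0, and 1 otherwise. -/
noncomputable def MajSeen {n : ℕ} (A : Adversary n) (i : Fin n) (m : ℕ) : Bool :=
  if seenOnes A i m ≤ seenZeros A i m then false else true

/-- The unbeatable majority consensus protocol `Opt_Maj`. -/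
noncomputable def OptMaj (n t : ℕ) : ProtoDec n := fun A i =>
  runDec fun m =>
    if Knows t (Maj0 n) A i m then some false
    else if Knows t (Maj1 n) A i m then some true
    else if ∃ k ≤ m, RevealedTime A k i m then some (MajSeen A i m)
    else none

/-- The fact `∀1`: all initial values are 1. -/
def all1 (n : ℕ) : Adversary n → ℕ → Prop := fun A _ => ∀ j, A.init j = true

/-- The sender set of `i` repeats at `⟨i,m⟩`: `i` hears from the same set of processes
in rounds `m-1` and `m` (only meaningful for `m ≥ 2`). -/
def senderSetRepeats {n : ℕ} (A : Adversary n) (i : Fin n) (m : ℕ) : Prop :=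
  ∀ j, (A.F (m - 2) j i ↔ A.F (m - 1) j i)

/-- The protocol `P0_opt` of Halpern, Moses and Waarts. -/
noncomputable def P0opt (n t : ℕ) : ProtoDec n := fun A i =>
  runDec fun m =>
    if Knows t (existsVal false) A i m then some false
    else if Knows t (all1 n) A i m ∨ (2 ≤ m ∧ senderSetRepeats A i m) then some true
    else none

/-- The fact `∃correct(v)`: some correct (never-failing) process knows `∃v`. -/
def ExistsCorrectKnows {n : ℕ} (t : ℕ) (v : Bool) : Adversary n → ℕ → Prop :=
  fun A m => ∃ j, ¬ A.Faulty j ∧ Knows t (existsVal v) A j m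

/-- The number `d` of failures process `i` knows of at time `m`: the number of
processes `j ≠ i` from which `i` receives no message in round `m`. -/
noncomputable def knownFaults {n : ℕ} (A : Adversary n) (i : Fin n) : ℕ → ℕ
  | 0 => 0
  | m + 1 => (Finset.univ.filter fun j => j ≠ i ∧ ¬ A.F m j i).card

/-- The protocol `u-P₀` for uniform consensus: decide 0 as soon as
`K_i ∃correct(0)` holds, otherwise decide 1 at time `t+1`. -/
noncomputable def uP0 (n t : ℕ) : ProtoDec n := fun A i =>
  runDec fun m =>
    if Knows t (ExistsCorrectKnows t false) A i m then some false
    else if m = t + 1 then some true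
    else none

/-- The unbeatable uniform consensus protocol `u-Opt₀`. -/
noncomputable def uOpt0 (n t : ℕ) : ProtoDec n := fun A i =>
  runDec fun m =>
    if Knows t (ExistsCorrectKnows t false) A i m then some false
    else if ¬ Knows t (existsVal false) A i m ∧ ∃ k ≤ m, RevealedTime A k i m then
      some true
    else none

/-- All decisions in the run `P[A]` are taken at or before time `m`. -/
def AllDecidedBy {n : ℕ} (P : ProtoDec n) (A : Adversary n) (m : ℕ) : Prop :=
  ∀ i k, P A i k ≠ none → P A i m ≠ none

/-- `Q` last-decider dominates `P`. -/
def LDDominates {n : ℕ} (t : ℕ) (Q P : ProtoDec n) : Prop :=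
  ∀ A : Adversary n, Valid t A → ∀ m, AllDecidedBy P A m → AllDecidedBy Q A m

/-- A 0-chain for `⟨i,m⟩`: distinct processes `j₀,…,j_d = i` with `d ≤ m`, `j₀` having
initial value 0, and `j_k` receiving a message from `j_{k-1}` at time `k` (round `k`). -/
def ZeroChain {n : ℕ} (A : Adversary n) (i : Fin n) (m : ℕ) : Prop :=
  ∃ d ≤ m, ∃ js : ℕ → Fin n, js d = i ∧
    (∀ k ≤ d, ∀ l ≤ d, js k = js l → k = l) ∧
    A.init (js 0) = false ∧
    ∀ k, 1 ≤ k → k ≤ d → A.F (k - 1) (js (k - 1)) (js k)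

/-! Knowing `∃v` amounts to having seen a time-`0` node with value `v`: otherwise the run with
the same failure pattern and all values flipped to `!v` looks the same.

If `(j₀, 0)` reaches an active process `i` at time `t + 1`, it reaches everyone. Let `S k` be the
set of processes informed of `(j₀, 0)` at time `k`. If some `j` were not informed at `t + 1`,
every process in `S k` with `k ≤ t` would have crashed by time `k + 1` (otherwise it would have
told `j`). A set `S k` that then fails to grow can never grow again, so it would contain `i`;
hence `S 0 ⊂ S 1 ⊂ ⋯ ⊂ S t` consists of at least `t + 1` faulty processes. -/

namespace Adversary

variable {n : ℕ} (A : Adversary n)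

theorem succ_le_crash_of_F {m : ℕ} {j i : Fin n} (h : A.F m j i) :
    ((m + 1 : ℕ) : ℕ∞) ≤ A.crash j :=
  not_lt.mp fun hlt => A.after_crash m j i hlt h

theorem faulty_of_crash_le {j : Fin n} {m : ℕ} (h : A.crash j ≤ m) : A.Faulty j :=
  ne_top_of_le_ne_top (ENat.natCast_ne_top m) h

end Adversary

namespace Seen

variable {n : ℕ} {A B : Adversary n} {p : Fin n × ℕ}

theorem of_le {x : Fin n} {a b : ℕ} (h : Seen A p (x, a)) (hab : a ≤ b) : Seen A p (x, b) := by
  induction b, hab using Nat.le_induction with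
  | base => exact h
  | succ b _ ih => exact ih.self

theorem of_F_eq (hF : A.F = B.F) {q : Fin n × ℕ} (h : Seen A p q) : Seen B p q := by
  induction h with
  | refl => exact .refl _
  | self _ ih => exact ih.self
  | step _ hjF ih => exact ih.step (hF ▸ hjF)

theorem succ_inv {q : Fin n} {k : ℕ} (h : Seen A p (q, k + 1)) (hp : p.2 ≤ k) :
    Seen A p (q, k) ∨ ∃ r, Seen A p (r, k) ∧ A.F k r q := by
  cases h with
  | refl => exact absurd hp (by omega)
  | self h => exact .inl h
  | step h hF => exact .inr ⟨_, h, hF⟩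

end Seen

def informed {n : ℕ} (A : Adversary n) (p : Fin n × ℕ) (k : ℕ) : Set (Fin n) :=
  {q | Seen A p (q, k)}

section Informed

variable {n : ℕ} {A : Adversary n} {p : Fin n × ℕ}

theorem informed_mono {k l : ℕ} (hkl : k ≤ l) : informed A p k ⊆ informed A p l :=
  fun _ hq => Seen.of_le hq hkl

theorem informed_subset_of_stall {k : ℕ} (hp : p.2 ≤ k)
    (hstall : informed A p (k + 1) ⊆ informed A p k)
    (hcrash : ∀ q ∈ informed A p k, A.crash q ≤ ((k + 1 : ℕ) : ℕ∞)) :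
    ∀ m, k ≤ m → informed A p m ⊆ informed A p k := by
  intro m hkm
  induction m, hkm using Nat.le_induction with
  | base => exact le_rfl
  | succ m hkm ih =>
    intro q hq
    rcases Seen.succ_inv hq (hp.trans hkm) with hq | ⟨r, hr, hF⟩
    · exact ih hq
    · have hm : m = k := by
        have := Nat.cast_le.mp ((A.succ_le_crash_of_F hF).trans (hcrash r (ih hr)))
        omega
      subst hm
      exact hstall (Seen.step hr hF)

theorem crash_le_of_notMem_informed {t k : ℕ} {j q : Fin n} (hj : j ∉ informed A p (t + 1))
    (hk : k ≤ t) (hq : q ∈ informed A p k) : A.crash q ≤ ((k + 1 : ℕ) : ℕ∞) := by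
  by_contra hlt
  have hsent : Seen A p (j, k + 1) := Seen.step hq (A.before_crash k q j (not_le.mp hlt))
  exact hj (Seen.of_le hsent (by omega))

theorem informed_ssubset_succ {t k : ℕ} {i j : Fin n} (hp : p.2 ≤ k) (hk : k ≤ t)
    (hi : A.Active i (t + 1)) (hi' : i ∈ informed A p (t + 1)) (hj : j ∉ informed A p (t + 1)) :
    informed A p k ⊂ informed A p (k + 1) := by
  refine (informed_mono k.le_succ).ssubset_of_not_subset fun hstall => ?_
  have hcrash q (hq : q ∈ informed A p k) := crash_le_of_notMem_informed hj hk hq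
  have hcrash_i := hcrash i (informed_subset_of_stall hp hstall hcrash (t + 1) (by omega) hi')
  exact (hcrash_i.trans (Nat.cast_le.mpr (by omega))).not_gt hi

theorem succ_le_ncard_informed {t : ℕ} {i j j₀ : Fin n} (hi : A.Active i (t + 1))
    (hi' : i ∈ informed A (j₀, 0) (t + 1)) (hj : j ∉ informed A (j₀, 0) (t + 1)) :
    ∀ k ≤ t, k + 1 ≤ (informed A (j₀, 0) k).ncard := by
  intro k hk
  induction k with
  | zero => exact (Set.ncard_pos (Set.toFinite _)).mpr ⟨j₀, .refl _⟩
  | succ k ih =>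
    exact (ih (by omega)).trans_lt
      (Set.ncard_lt_ncard (informed_ssubset_succ (Nat.zero_le k) (by omega) hi hi' hj))

theorem informed_eq_univ {t : ℕ} (hA : Valid t A) {i j₀ : Fin n} (hi : A.Active i (t + 1))
    (hi' : i ∈ informed A (j₀, 0) (t + 1)) : informed A (j₀, 0) (t + 1) = Set.univ := by
  by_contra hne
  obtain ⟨j, hj⟩ := (Set.ne_univ_iff_exists_notMem _).mp hne
  have hfaulty : informed A (j₀, 0) t ⊆ {q | A.Faulty q} := fun q hq =>
    A.faulty_of_crash_le (crash_le_of_notMem_informed hj le_rfl hq)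
  have := (succ_le_ncard_informed hi hi' hj t le_rfl).trans (Set.ncard_le_ncard hfaulty)
  exact absurd (this.trans hA) (by omega)

end Informed

section Knowledge

variable {n t : ℕ} {A : Adversary n} {v : Bool} {i : Fin n} {m : ℕ}

theorem knows_existsVal_of_seen {j₀ : Fin n} (hv : A.init j₀ = v)
    (h : Seen A (j₀, 0) (i, m)) : Knows t (existsVal v) A i m :=
  fun _ _ ⟨_, _, _, hinit, _⟩ => ⟨j₀, hinit j₀ h ▸ hv⟩

theorem exists_seen_of_knows_existsVal (hA : Valid t A) (hi : A.Active i m)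
    (hK : Knows t (existsVal v) A i m) : ∃ j₀, A.init j₀ = v ∧ Seen A (j₀, 0) (i, m) := by
  by_contra! hno
  let B : Adversary n := { A with init := fun _ => !v }
  have hsame : sameLocal A B i m := by
    have hF : A.F = B.F := rfl
    refine ⟨hi, hi, fun _ => ⟨Seen.of_F_eq hF, Seen.of_F_eq hF.symm⟩, fun j hj => ?_,
      fun _ _ _ _ => Iff.rfl⟩
    exact Bool.eq_not.mpr fun hv => hno j hv hj
  obtain ⟨j, hj⟩ := hK B hA hsame
  simp [B] at hj

theorem knows_existsVal_iff (hA : Valid t A) (hi : A.Active i m) :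
    Knows t (existsVal v) A i m ↔ ∃ j₀, A.init j₀ = v ∧ Seen A (j₀, 0) (i, m) :=
  ⟨exists_seen_of_knows_existsVal hA hi, fun ⟨_, hv, h⟩ => knows_existsVal_of_seen hv h⟩

end Knowledge

theorem knowledge_uniform_at_t_plus_one_general (n t : ℕ)
    (A : Adversary n) (hA : Valid t A) (v : Bool) (i j : Fin n)
    (hi : A.Active i (t + 1)) (hj : A.Active j (t + 1)) :
    Knows t (existsVal v) A i (t + 1) ↔ Knows t (existsVal v) A j (t + 1) := by
  rw [knows_existsVal_iff hA hi, knows_existsVal_iff hA hj]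
  constructor
  · rintro ⟨j₀, hv, h⟩
    exact ⟨j₀, hv, Set.eq_univ_iff_forall.mp (informed_eq_univ hA hi h) j⟩
  · rintro ⟨j₀, hv, h⟩
    exact ⟨j₀, hv, Set.eq_univ_iff_forall.mp (informed_eq_univ hA hj h) i⟩

/-- At time `t+1`, knowledge of `∃v` is the same for all (active) processes. -/
theorem knowledge_uniform_at_t_plus_one (n t : ℕ) (ht : t < n)
    (A : Adversary n) (hA : Valid t A) (v : Bool) (i j : Fin n)
    (hi : A.Active i (t + 1)) (hj : A.Active j (t + 1)) :
    Knows t (existsVal v) A i (t + 1) ↔ Knows t (existsVal v) A j (t + 1) :=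
  knowledge_uniform_at_t_plus_one_general n t A hA v i j hi hj
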